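/- arXiv:1412.6298 — 6 statements merged into one kernel-verified Lean document; each statement's English description precedes it below -/
import Mathlib

section
/- Let f : [0,∞) → [0,∞) be continuous, increasing, with f(0)=0 and f(t) > 0 for t > 0, C¹ on (0,∞), and suppose t f'(t) ≤ (1+M) f(t) for all t > 0 with M > 0. Define F(t) = ∫₀ᵗ f. Then t f(t)/F(t) ≤ 2 + M for all t > 0. -/
/-! With `F` the primitive of `f`, the function `g t = (2 + M) F t - t f t` vanishes at `0` and
has derivative `(1 + M) f t - t f' t ≥ 0`, so it is nonnegative; dividing by `F t > 0` gives the
claim. -/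

open Set

section PrimitiveIci

variable {f : ℝ → ℝ} {a : ℝ}

theorem ContinuousOn.intervalIntegrable_of_Ici (hf : ContinuousOn f (Ici a)) {b : ℝ}
    (hab : a ≤ b) : IntervalIntegrable f MeasureTheory.volume a b :=
  (hf.mono Icc_subset_Ici_self).intervalIntegrable_of_Icc hab

theorem ContinuousOn.continuousOn_primitive_Ici (hf : ContinuousOn f (Ici a)) :
    ContinuousOn (fun t => ∫ x in a..t, f x) (Ici a) := by
  intro t ht
  have hat : a ≤ t + 1 := by linarith [mem_Ici.mp ht]
  have hIcc : ContinuousOn (fun t => ∫ x in a..t, f x) (Icc a (t + 1)) := by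
    rw [← uIcc_of_le hat]
    exact intervalIntegral.continuousOn_primitive_interval'
      (hf.intervalIntegrable_of_Ici hat) left_mem_uIcc
  refine (hIcc t ⟨ht, by linarith⟩).mono_of_mem_nhdsWithin ?_
  rw [← Ici_inter_Iic]
  exact inter_mem_nhdsWithin _ (Iic_mem_nhds (by linarith))

theorem ContinuousOn.hasDerivAt_primitive_of_Ici (hf : ContinuousOn f (Ici a)) {t : ℝ}
    (ht : a < t) : HasDerivAt (fun u => ∫ x in a..u, f x) (f t) t :=
  intervalIntegral.integral_hasDerivAt_right (hf.intervalIntegrable_of_Ici ht.le)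
    ((hf.mono Ioi_subset_Ici_self).stronglyMeasurableAtFilter isOpen_Ioi t ht)
    (hf.continuousAt (Ici_mem_nhds ht))

end PrimitiveIci

theorem mul_le_mul_integral_of_mul_deriv_le {f f' : ℝ → ℝ} {c : ℝ}
    (hcont : ContinuousOn f (Ici 0)) (hderiv : ∀ t ∈ Ioi (0:ℝ), HasDerivAt f (f' t) t)
    (h : ∀ t ∈ Ioi (0:ℝ), t * f' t ≤ c * f t) {t : ℝ} (ht : 0 ≤ t) :
    t * f t ≤ (c + 1) * ∫ x in (0:ℝ)..t, f x := by
  set g : ℝ → ℝ := fun t => (c + 1) * (∫ x in (0:ℝ)..t, f x) - t * f t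
  have hg_cont : ContinuousOn g (Ici 0) :=
    (hcont.continuousOn_primitive_Ici.const_smul (c + 1)).sub (continuousOn_id.mul hcont)
  have hg_deriv : ∀ s ∈ Ioi (0:ℝ), HasDerivAt g (c * f s - s * f' s) s := fun s hs =>
    (((hcont.hasDerivAt_primitive_of_Ici hs).const_mul (c + 1)).sub
      ((hasDerivAt_id s).mul (hderiv s hs))).congr_deriv (by simp only [id_eq]; ring)
  have hg_mono : MonotoneOn g (Ici 0) := by
    refine monotoneOn_of_hasDerivWithinAt_nonneg (f' := fun s => c * f s - s * f' s)
      (convex_Ici 0) hg_cont ?_ ?_ <;> rw [interior_Ici]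
    · exact fun s hs => (hg_deriv s hs).hasDerivWithinAt
    · exact fun s hs => by linarith [h s hs]
  have hg_le := hg_mono self_mem_Ici ht ht
  simp only [g, intervalIntegral.integral_same, mul_zero, zero_mul, sub_zero] at hg_le
  linarith

theorem stmt_4_general (f f' : ℝ → ℝ) (M : ℝ)
    (hcont : ContinuousOn f (Ici 0))
    (hderiv : ∀ t ∈ Ioi (0:ℝ), HasDerivAt f (f' t) t)
    (hpos : ∀ t ∈ Ioi (0:ℝ), 0 < f t)
    (h : ∀ t ∈ Ioi (0:ℝ), t * f' t ≤ (1 + M) * f t)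
    (F : ℝ → ℝ) (hF : ∀ t, F t = ∫ τ in (0:ℝ)..t, f τ) :
    ∀ t ∈ Ioi (0:ℝ), t * f t / F t ≤ 2 + M := by
  intro t ht
  have hF_pos : 0 < F t := by
    rw [hF t]
    exact intervalIntegral.intervalIntegral_pos_of_pos_on
      (hcont.intervalIntegrable_of_Ici ht.le) (fun x hx => hpos x hx.1) ht
  rw [div_le_iff₀ hF_pos, hF t]
  have hbound := mul_le_mul_integral_of_mul_deriv_le hcont hderiv h ht.le
  linarith

theorem stmt_4 (f f' : ℝ → ℝ) (M : ℝ) (hM : 0 < M)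
    (hcont : ContinuousOn f (Ici 0))
    (hderiv : ∀ t ∈ Ioi (0:ℝ), HasDerivAt f (f' t) t)
    (hmono : MonotoneOn f (Ici 0))
    (hf0 : f 0 = 0)
    (hpos : ∀ t ∈ Ioi (0:ℝ), 0 < f t)
    (h : ∀ t ∈ Ioi (0:ℝ), t * f' t ≤ (1 + M) * f t)
    (F : ℝ → ℝ) (hF : ∀ t, F t = ∫ τ in (0:ℝ)..t, f τ) :
    ∀ t ∈ Ioi (0:ℝ), t * f t / F t ≤ 2 + M :=
  stmt_4_general f f' M hcont hderiv hpos h F hF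
end

section
/- Let f satisfy the Keller–Osserman-type setup: f increasing, C¹ on (0,∞), f(0)=0, with (1+m) f(t) ≤ t f'(t) ≤ (1+M) f(t) for all t > 0, where 0 < m < M, and F(t) = ∫₀ᵗ f. Then the integral φ(u) := ∫ᵤ^∞ dt/√(F(t)) is finite for every u > 0. -/
open Set Real MeasureTheory

/-!
Since `t f' ≥ (1 + m) f`, the function `t f(t) - (2 + m) F(t)` is nondecreasing from its value
`0` at `t = 0`, so `t F'(t) ≥ (2 + m) F(t)`. Hence `F(t) / t ^ (2 + m)` is nondecreasing and
`F(t) ≥ c t ^ (2 + m)` on `[u, ∞)` with `c > 0`, giving `1 / √F(t) ≤ C t ^ (-(1 + m / 2))`,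
which is integrable at infinity because `m > 0`.
-/

theorem hasDerivAt_integral_of_continuousOn_Ici {f : ℝ → ℝ} {a x : ℝ}
    (hf : ContinuousOn f (Ici a)) (hx : a < x) :
    HasDerivAt (fun t => ∫ τ in a..t, f τ) (f x) x :=
  intervalIntegral.integral_hasDerivAt_right
    ((hf.mono (uIcc_of_le hx.le ▸ Icc_subset_Ici_self)).intervalIntegrable)
    ((hf.mono Ioi_subset_Ici_self).stronglyMeasurableAtFilter isOpen_Ioi x hx)
    (hf.continuousAt (Ici_mem_nhds hx))

theorem monotoneOn_div_rpow_of_mul_le_mul_deriv {g g' : ℝ → ℝ} {q : ℝ}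
    (hg : ∀ t ∈ Ioi 0, HasDerivAt g (g' t) t) (h : ∀ t ∈ Ioi 0, q * g t ≤ t * g' t) :
    MonotoneOn (fun t => g t / t ^ q) (Ioi 0) := by
  have hderiv : ∀ t ∈ Ioi (0 : ℝ), HasDerivAt (fun t => g t / t ^ q)
      (t ^ (q - 1) * (t * g' t - q * g t) / (t ^ q) ^ 2) t := by
    intro t ht
    have hsplit : t ^ q = t * t ^ (q - 1) := by
      rw [rpow_sub_one (ne_of_gt ht), mul_div_cancel₀ _ (ne_of_gt ht)]
    refine ((hg t ht).div (hasDerivAt_rpow_const (Or.inl (ne_of_gt ht)))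
      (rpow_pos_of_pos ht q).ne').congr_deriv ?_
    rw [hsplit]; ring
  refine monotoneOn_of_hasDerivWithinAt_nonneg (convex_Ioi 0)
    (f' := fun t => t ^ (q - 1) * (t * g' t - q * g t) / (t ^ q) ^ 2)
    (fun t ht => (hderiv t ht).continuousAt.continuousWithinAt) (fun t ht => ?_) (fun t ht => ?_)
  · rw [interior_Ioi] at ht ⊢
    exact (hderiv t ht).hasDerivWithinAt
  · rw [interior_Ioi] at ht
    have hgrowth := h t ht
    have hpow := rpow_pos_of_pos ht (q - 1)
    exact div_nonneg (mul_nonneg hpow.le (by linarith)) (sq_nonneg _)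

theorem mul_integral_le_of_le_mul_deriv {f f' : ℝ → ℝ} {q t : ℝ}
    (hcont : ContinuousOn f (Ici 0)) (hderiv : ∀ x ∈ Ioi 0, HasDerivAt f (f' x) x)
    (h : ∀ x ∈ Ioi 0, (q - 1) * f x ≤ x * f' x) (ht : 0 ≤ t) :
    q * ∫ x in 0..t, f x ≤ t * f t := by
  set G : ℝ → ℝ := fun x => x * f x - q * ∫ τ in 0..x, f τ
  have hGderiv : ∀ x ∈ Ioi (0 : ℝ), HasDerivAt G (x * f' x - (q - 1) * f x) x := by
    intro x hx
    refine (((hasDerivAt_id x).mul (hderiv x hx)).sub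
      ((hasDerivAt_integral_of_continuousOn_Ici hcont hx).const_mul q)).congr_deriv ?_
    simp only [id]; ring
  have hGcont : ContinuousOn G (Icc 0 t) := by
    have hint : IntegrableOn f (uIcc 0 t) := by
      rw [uIcc_of_le ht]; exact (hcont.mono Icc_subset_Ici_self).integrableOn_Icc
    have hprim := intervalIntegral.continuousOn_primitive_interval hint
    rw [uIcc_of_le ht] at hprim
    exact (continuousOn_id.mul (hcont.mono Icc_subset_Ici_self)).sub (hprim.const_smul q)
  have hGmono : MonotoneOn G (Icc 0 t) := by
    refine monotoneOn_of_hasDerivWithinAt_nonneg (convex_Icc 0 t) hGcont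
      (f' := fun x => x * f' x - (q - 1) * f x)
      (fun x hx => ?_) (fun x hx => ?_)
    · rw [interior_Icc] at hx
      exact (hGderiv x hx.1).hasDerivWithinAt
    · rw [interior_Icc] at hx
      linarith [h x hx.1]
  have hG := hGmono ⟨le_rfl, ht⟩ ⟨ht, le_rfl⟩ ht
  simp only [G, zero_mul, intervalIntegral.integral_same, mul_zero, sub_zero] at hG
  linarith

theorem integrableOn_Ioi_one_div_sqrt_of_rpow_le {g : ℝ → ℝ} {u c q : ℝ} (hu : 0 < u)
    (hc : 0 < c) (hq : 2 < q) (hg : ContinuousOn g (Ioi u))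
    (hle : ∀ t ∈ Ioi u, c * t ^ q ≤ g t) :
    IntegrableOn (fun t => 1 / √(g t)) (Ioi u) := by
  have hdom : IntegrableOn (fun t : ℝ => (√c)⁻¹ * t ^ (-(q / 2))) (Ioi u) :=
    (integrableOn_Ioi_rpow_of_lt (by linarith) hu).const_mul _
  have hgpos : ∀ t ∈ Ioi u, 0 < g t := fun t ht =>
    lt_of_lt_of_le (mul_pos hc (rpow_pos_of_pos (hu.trans ht) q)) (hle t ht)
  refine hdom.mono' ((continuousOn_const.div (continuous_sqrt.comp_continuousOn hg)
    fun t ht => (sqrt_pos.2 (hgpos t ht)).ne').aestronglyMeasurable measurableSet_Ioi) ?_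
  rw [ae_restrict_iff' measurableSet_Ioi]
  refine Filter.Eventually.of_forall fun t ht => ?_
  have ht0 : 0 < t := hu.trans ht
  have hsqrt : √(c * t ^ q) = √c * t ^ (q / 2) := by
    rw [sqrt_mul hc.le, sqrt_eq_rpow (t ^ q), ← rpow_mul ht0.le]; ring_nf
  calc ‖1 / √(g t)‖ = 1 / √(g t) := by rw [norm_of_nonneg (by positivity)]
    _ ≤ 1 / √(c * t ^ q) :=
        one_div_le_one_div_of_le (by positivity) (sqrt_le_sqrt (hle t ht))
    _ = (√c)⁻¹ * t ^ (-(q / 2)) := by rw [hsqrt, rpow_neg ht0.le]; field_simp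

theorem stmt_5_general (f f' : ℝ → ℝ) (m M : ℝ) (hm : 0 < m)
    (hcont : ContinuousOn f (Ici 0))
    (hderiv : ∀ t ∈ Ioi (0:ℝ), HasDerivAt f (f' t) t)
    (hpos : ∀ t ∈ Ioi (0:ℝ), 0 < f t)
    (h : ∀ t ∈ Ioi (0:ℝ), (1 + m) * f t ≤ t * f' t ∧ t * f' t ≤ (1 + M) * f t)
    (F : ℝ → ℝ) (hF : ∀ t, F t = ∫ τ in (0:ℝ)..t, f τ) :
    ∀ u ∈ Ioi (0:ℝ), IntegrableOn (fun t => 1 / Real.sqrt (F t)) (Ioi u) := by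
  have hFderiv : ∀ t ∈ Ioi (0:ℝ), HasDerivAt F (f t) t := fun t ht =>
    (funext hF : F = _) ▸ hasDerivAt_integral_of_continuousOn_Ici hcont ht
  have hFpos : ∀ t ∈ Ioi (0:ℝ), 0 < F t := fun t (ht : 0 < t) =>
    hF t ▸ intervalIntegral.intervalIntegral_pos_of_pos_on
      ((hcont.mono (uIcc_of_le ht.le ▸ Icc_subset_Ici_self)).intervalIntegrable)
      (fun x hx => hpos x hx.1) ht
  have hFgrowth : ∀ t ∈ Ioi (0:ℝ), (2 + m) * F t ≤ t * f t := fun t (ht : 0 < t) =>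
    hF t ▸ mul_integral_le_of_le_mul_deriv hcont hderiv
      (fun x hx => by linarith [(h x hx).1]) ht.le
  have hFmono := monotoneOn_div_rpow_of_mul_le_mul_deriv hFderiv hFgrowth
  intro u (hu : 0 < u)
  refine integrableOn_Ioi_one_div_sqrt_of_rpow_le hu (c := F u / u ^ (2 + m)) (q := 2 + m)
    (div_pos (hFpos u hu) (rpow_pos_of_pos hu _)) (by linarith)
    (fun t ht => (hFderiv t (hu.trans ht)).continuousAt.continuousWithinAt) fun t ht => ?_
  have ht0 : (0:ℝ) < t := hu.trans ht
  rw [← le_div_iff₀ (rpow_pos_of_pos ht0 _)]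
  exact hFmono hu ht0 (le_of_lt ht)

theorem stmt_5 (f f' : ℝ → ℝ) (m M : ℝ) (hm : 0 < m) (hmM : m < M)
    (hcont : ContinuousOn f (Ici 0))
    (hderiv : ∀ t ∈ Ioi (0:ℝ), HasDerivAt f (f' t) t)
    (hmono : MonotoneOn f (Ici 0))
    (hf0 : f 0 = 0)
    (hpos : ∀ t ∈ Ioi (0:ℝ), 0 < f t)
    (h : ∀ t ∈ Ioi (0:ℝ), (1 + m) * f t ≤ t * f' t ∧ t * f' t ≤ (1 + M) * f t)
    (F : ℝ → ℝ) (hF : ∀ t, F t = ∫ τ in (0:ℝ)..t, f τ) :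
    ∀ u ∈ Ioi (0:ℝ), IntegrableOn (fun t => 1 / Real.sqrt (F t)) (Ioi u) :=
  stmt_5_general f f' m M hm hcont hderiv hpos h F hF
end

section
/- With f, F, φ as in the Keller–Osserman setup (f increasing C¹, f(0)=0, (1+m)f(t) ≤ t f'(t) ≤ (1+M)f(t), F antiderivative of f vanishing at 0, φ(u) = ∫ᵤ^∞ dt/√F(t)), the function φ : (0,∞) → (0,∞) is strictly decreasing, tends to +∞ as u → 0⁺, and tends to 0 as u → +∞. -/
/-!
The growth condition `(1 + m) f ≤ t f'` makes `f t / t ^ (1 + m)` nondecreasing, so `f` is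
at most `f 1 * t` on `(0, 1]` and at least `f 1 * t ^ (1 + m)` on `[1, ∞)`. Since `f` is
monotone, `F t` is comparable to `t f t`, hence `1 / √F` is at least a multiple of `1 / t`
near `0` (a non-integrable singularity) and at most a multiple of `t ^ (-(1 + m / 2))` near
`∞` (integrable because `m > 0`). As `1 / √F` is positive and decreasing, `φ` is a positive,
strictly decreasing tail integral with the stated limits.
-/

open Set Real MeasureTheory Filter

theorem monotoneOn_mul_rpow_neg_of_le_mul_deriv {f f' : ℝ → ℝ} {p : ℝ}
    (hf : ∀ t ∈ Ioi (0:ℝ), HasDerivAt f (f' t) t)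
    (h : ∀ t ∈ Ioi (0:ℝ), p * f t ≤ t * f' t) :
    MonotoneOn (fun t => f t * t ^ (-p)) (Ioi 0) := by
  have hd : ∀ t ∈ Ioi (0:ℝ), HasDerivAt (fun t => f t * t ^ (-p))
      (f' t * t ^ (-p) + f t * (-p * t ^ (-p - 1))) t := fun t ht =>
    (hf t ht).mul (hasDerivAt_rpow_const (Or.inl ht.ne'))
  refine monotoneOn_of_deriv_nonneg (convex_Ioi 0)
    (fun t ht => (hd t ht).continuousAt.continuousWithinAt)
    (fun t ht => (hd t (interior_subset ht)).differentiableAt.differentiableWithinAt)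
    fun t ht => ?_
  rw [interior_Ioi] at ht
  have hpow : t ^ (-p) = t * t ^ (-p - 1) := by
    rw [rpow_sub_one ht.ne', mul_div_cancel₀ _ ht.ne']
  rw [(hd t ht).deriv, hpow]
  nlinarith [mul_nonneg (sub_nonneg.2 (h t ht)) (rpow_pos_of_pos ht (-p - 1)).le]

theorem mul_rpow_le_mul_rpow_of_le_mul_deriv {f f' : ℝ → ℝ} {p s t : ℝ}
    (hf : ∀ t ∈ Ioi (0:ℝ), HasDerivAt f (f' t) t)
    (h : ∀ t ∈ Ioi (0:ℝ), p * f t ≤ t * f' t) (hs : 0 < s) (hst : s ≤ t) :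
    f s * t ^ p ≤ f t * s ^ p := by
  have ht : 0 < t := hs.trans_le hst
  have := monotoneOn_mul_rpow_neg_of_le_mul_deriv hf h hs ht hst
  simp only [rpow_neg hs.le, rpow_neg ht.le, ← div_eq_mul_inv] at this
  rwa [div_le_div_iff₀ (rpow_pos_of_pos hs p) (rpow_pos_of_pos ht p)] at this

theorem MonotoneOn.mul_le_intervalIntegral {f : ℝ → ℝ} {a b : ℝ}
    (hf : MonotoneOn f (Icc a b)) (hab : a ≤ b) :
    (b - a) * f a ≤ ∫ x in a..b, f x := by
  have hfi : IntervalIntegrable f volume a b := (uIcc_of_le hab ▸ hf).intervalIntegrable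
  simpa using intervalIntegral.integral_mono_on hab intervalIntegrable_const hfi
    fun x hx => hf (left_mem_Icc.2 hab) hx hx.1

theorem MonotoneOn.intervalIntegral_le_mul {f : ℝ → ℝ} {a b : ℝ}
    (hf : MonotoneOn f (Icc a b)) (hab : a ≤ b) :
    ∫ x in a..b, f x ≤ (b - a) * f b := by
  have hfi : IntervalIntegrable f volume a b := (uIcc_of_le hab ▸ hf).intervalIntegrable
  simpa using intervalIntegral.integral_mono_on hab hfi intervalIntegrable_const
    fun x hx => hf hx (right_mem_Icc.2 hab) hx.2

section TailIntegral

variable {g : ℝ → ℝ}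

theorem AntitoneOn.integrableOn_Ioi_of_le_rpow (hg : AntitoneOn g (Ioi 0))
    (hg0 : ∀ t ∈ Ioi (0:ℝ), 0 ≤ g t) {a C q : ℝ} (ha : 0 < a) (hq : q < -1)
    (hle : ∀ t ∈ Ioi a, g t ≤ C * t ^ q) : IntegrableOn g (Ioi a) := by
  have hsub : Ioi a ⊆ Ioi 0 := Ioi_subset_Ioi ha.le
  refine ((integrableOn_Ioi_rpow_of_lt hq ha).const_mul C).mono'
    (aemeasurable_restrict_of_antitoneOn measurableSet_Ioi (hg.mono hsub)).aestronglyMeasurable ?_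
  filter_upwards [self_mem_ae_restrict measurableSet_Ioi] with t ht
  rw [norm_of_nonneg (hg0 t (hsub ht))]
  exact hle t ht

theorem AntitoneOn.integrableOn_Ioi (hg : AntitoneOn g (Ioi 0)) {a u : ℝ}
    (ha : IntegrableOn g (Ioi a)) (hu : 0 < u) : IntegrableOn g (Ioi u) := by
  have hIcc : IntegrableOn g (Icc u (max u a)) :=
    (hg.mono fun x hx => hu.trans_le hx.1).integrableOn_isCompact isCompact_Icc
  rw [← Ioc_union_Ioi_eq_Ioi (le_max_left u a)]
  exact (hIcc.mono_set Ioc_subset_Icc_self).union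
    (ha.mono_set (Ioi_subset_Ioi (le_max_right u a)))

theorem integral_Ioi_eq_integral_Ioc_add (hint : ∀ u ∈ Ioi (0:ℝ), IntegrableOn g (Ioi u))
    {u v : ℝ} (hu : 0 < u) (huv : u ≤ v) :
    ∫ t in Ioi u, g t = (∫ t in Ioc u v, g t) + ∫ t in Ioi v, g t := by
  rw [← setIntegral_union (Ioc_disjoint_Ioi le_rfl) measurableSet_Ioi
    ((hint u hu).mono_set Ioc_subset_Ioi_self) (hint v (hu.trans_le huv)),
    Ioc_union_Ioi_eq_Ioi huv]

theorem strictAntiOn_integral_Ioi (hint : ∀ u ∈ Ioi (0:ℝ), IntegrableOn g (Ioi u))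
    (hpos : ∀ t ∈ Ioi (0:ℝ), 0 < g t) :
    StrictAntiOn (fun u => ∫ t in Ioi u, g t) (Ioi 0) := by
  intro u hu v _ huv
  have hIoc : 0 < ∫ t in Ioc u v, g t := by
    rw [← intervalIntegral.integral_of_le huv.le]
    refine intervalIntegral.intervalIntegral_pos_of_pos_on ?_
      (fun t ht => hpos t (hu.trans ht.1)) huv
    exact (intervalIntegrable_iff_integrableOn_Ioc_of_le huv.le).2
      ((hint u hu).mono_set Ioc_subset_Ioi_self)
  simp only [integral_Ioi_eq_integral_Ioc_add hint hu huv.le]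
  linarith

theorem tendsto_integral_Ioi_atTop {a : ℝ} (ha : IntegrableOn g (Ioi a)) :
    Tendsto (fun u => ∫ t in Ioi u, g t) atTop (nhds 0) := by
  have := tendsto_setIntegral_of_antitone (μ := volume) (f := g) (fun _ => measurableSet_Ioi)
    (fun _ _ h => Ioi_subset_Ioi h) ⟨a, ha⟩
  have hempty : ⋂ u : ℝ, Ioi u = ∅ :=
    eq_empty_of_forall_notMem fun x hx => lt_irrefl x (mem_iInter.1 hx x)
  rwa [hempty, Measure.restrict_empty, integral_zero_measure] at this

theorem tendsto_integral_Ioi_nhdsGT_zero (hint : ∀ u ∈ Ioi (0:ℝ), IntegrableOn g (Ioi u))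
    (hg0 : ∀ t ∈ Ioi (0:ℝ), 0 ≤ g t) {c : ℝ} (hc : 0 < c)
    (hle : ∀ t ∈ Ioc (0:ℝ) 1, c * t⁻¹ ≤ g t) :
    Tendsto (fun u => ∫ t in Ioi u, g t) (nhdsWithin 0 (Ioi 0)) atTop := by
  have hlog : Tendsto (fun u => c * -log u) (nhdsWithin 0 (Ioi 0)) atTop :=
    tendsto_neg_atBot_atTop.comp tendsto_log_nhdsGT_zero |>.const_mul_atTop hc
  refine tendsto_atTop_mono' _ ?_ hlog
  filter_upwards [self_mem_nhdsWithin, Ioo_mem_nhdsGT one_pos] with u hu hu1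
  have hu1 : u ≤ 1 := hu1.2.le
  calc c * -log u = ∫ t in u..1, c * t⁻¹ := by
        rw [intervalIntegral.integral_const_mul, integral_inv_of_pos hu one_pos,
          log_div one_ne_zero hu.ne', log_one, zero_sub]
    _ ≤ ∫ t in u..1, g t := by
        refine intervalIntegral.integral_mono_on hu1 ?_ ?_
          fun t ht => hle t ⟨hu.trans_le ht.1, ht.2⟩
        · exact (continuousOn_const.mul (continuousOn_inv₀.mono fun t ht =>
            (hu.trans_le ht.1).ne')).intervalIntegrable_of_Icc hu1
        · exact (intervalIntegrable_iff_integrableOn_Ioc_of_le hu1).2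
            ((hint u hu).mono_set Ioc_subset_Ioi_self)
    _ ≤ ∫ t in Ioi u, g t := by
        rw [intervalIntegral.integral_of_le hu1]
        exact setIntegral_mono_set (hint u hu)
          (ae_restrict_of_forall_mem measurableSet_Ioi fun t ht =>
            hg0 t (mem_Ioi.2 (lt_trans hu ht)))
          Ioc_subset_Ioi_self.eventuallyLE

theorem integral_Ioi_pos (hint : ∀ u ∈ Ioi (0:ℝ), IntegrableOn g (Ioi u))
    (hpos : ∀ t ∈ Ioi (0:ℝ), 0 < g t) {u : ℝ} (hu : 0 < u) : 0 < ∫ t in Ioi u, g t :=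
  calc 0 ≤ ∫ t in Ioi (u + 1), g t :=
        setIntegral_nonneg measurableSet_Ioi fun t ht =>
          (hpos t (mem_Ioi.2 (by linarith [mem_Ioi.1 ht]))).le
    _ < ∫ t in Ioi u, g t :=
        strictAntiOn_integral_Ioi hint hpos hu (by simp only [mem_Ioi]; linarith) (by linarith)

end TailIntegral

section Primitive

variable {f : ℝ → ℝ}

theorem integral_zero_le_mul (hf : MonotoneOn f (Ici 0)) {t : ℝ} (ht : 0 ≤ t) :
    ∫ x in (0:ℝ)..t, f x ≤ t * f t := by
  simpa using (hf.mono Icc_subset_Ici_self).intervalIntegral_le_mul ht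

theorem half_mul_le_integral_zero (hf : MonotoneOn f (Ici 0)) (hf0 : f 0 = 0) {t : ℝ}
    (ht : 0 ≤ t) : t / 2 * f (t / 2) ≤ ∫ x in (0:ℝ)..t, f x := by
  have hfi : IntervalIntegrable f volume 0 t :=
    (hf.mono (uIcc_of_le ht ▸ Icc_subset_Ici_self)).intervalIntegrable
  calc t / 2 * f (t / 2) = (t - t / 2) * f (t / 2) := by ring
    _ ≤ ∫ x in (t / 2)..t, f x :=
        (hf.mono (Icc_subset_Ici_self.trans (Ici_subset_Ici.2 (by linarith)))
          ).mul_le_intervalIntegral (by linarith)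
    _ ≤ ∫ x in (0:ℝ)..t, f x :=
        intervalIntegral.integral_mono_interval (by linarith) (by linarith) le_rfl
          (ae_restrict_of_forall_mem measurableSet_Ioc fun x hx =>
            show 0 ≤ f x from hf0 ▸ hf self_mem_Ici hx.1.le hx.1.le) hfi

theorem monotoneOn_integral_zero (hf : MonotoneOn f (Ici 0)) (hf0 : f 0 = 0) :
    MonotoneOn (fun t => ∫ x in (0:ℝ)..t, f x) (Ici 0) := fun _ hs _ ht hst =>
  intervalIntegral.integral_mono_interval le_rfl hs hst
    (ae_restrict_of_forall_mem measurableSet_Ioc fun x hx =>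
      show 0 ≤ f x from hf0 ▸ hf self_mem_Ici hx.1.le hx.1.le)
    (hf.mono (uIcc_of_le (mem_Ici.1 ht) ▸ Icc_subset_Ici_self)).intervalIntegrable

variable {f' : ℝ → ℝ} {p : ℝ}

theorem integral_zero_le_mul_sq (hf : MonotoneOn f (Ici 0)) (hf0 : f 0 = 0)
    (hderiv : ∀ t ∈ Ioi (0:ℝ), HasDerivAt f (f' t) t)
    (h : ∀ t ∈ Ioi (0:ℝ), p * f t ≤ t * f' t)
    (hp : 1 ≤ p) {t : ℝ} (ht : 0 < t) (ht1 : t ≤ 1) :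
    ∫ x in (0:ℝ)..t, f x ≤ f 1 * t ^ 2 := by
  have hf1 : 0 ≤ f 1 := hf0 ▸ hf self_mem_Ici (mem_Ici.2 zero_le_one) zero_le_one
  have hft : f t ≤ f 1 * t :=
    calc f t = f t * 1 ^ p := by rw [one_rpow, mul_one]
      _ ≤ f 1 * t ^ p := mul_rpow_le_mul_rpow_of_le_mul_deriv hderiv h ht ht1
      _ ≤ f 1 * t := mul_le_mul_of_nonneg_left
          (by simpa using rpow_le_rpow_of_exponent_ge ht ht1 hp) hf1
  calc ∫ x in (0:ℝ)..t, f x ≤ t * f t := integral_zero_le_mul hf ht.le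
    _ ≤ t * (f 1 * t) := mul_le_mul_of_nonneg_left hft ht.le
    _ = f 1 * t ^ 2 := by ring

theorem mul_rpow_le_integral_zero (hf : MonotoneOn f (Ici 0)) (hf0 : f 0 = 0)
    (hderiv : ∀ t ∈ Ioi (0:ℝ), HasDerivAt f (f' t) t)
    (h : ∀ t ∈ Ioi (0:ℝ), p * f t ≤ t * f' t)
    {t : ℝ} (ht : 2 ≤ t) :
    f 1 / 2 ^ (p + 1) * t ^ (p + 1) ≤ ∫ x in (0:ℝ)..t, f x := by
  have hft : f 1 * (t / 2) ^ p ≤ f (t / 2) := by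
    simpa using mul_rpow_le_mul_rpow_of_le_mul_deriv hderiv h one_pos (by linarith : 1 ≤ t / 2)
  calc f 1 / 2 ^ (p + 1) * t ^ (p + 1) = t / 2 * (f 1 * (t / 2) ^ p) := by
        rw [div_mul_eq_mul_div, mul_div_assoc, ← div_rpow (by linarith) (by norm_num),
          rpow_add_one (by positivity)]
        ring
    _ ≤ t / 2 * f (t / 2) := mul_le_mul_of_nonneg_left hft (by linarith)
    _ ≤ ∫ x in (0:ℝ)..t, f x := half_mul_le_integral_zero hf hf0 (by linarith)

end Primitive

theorem one_div_sqrt_le_of_mul_rpow_le {c r t y : ℝ} (hc : 0 < c) (ht : 0 < t)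
    (h : c * t ^ r ≤ y) : 1 / √y ≤ (√c)⁻¹ * t ^ (-(r / 2)) := by
  have hsq : √(c * t ^ r) = √c * t ^ (r / 2) := by
    rw [sqrt_mul hc.le, sqrt_eq_rpow (t ^ r), ← rpow_mul ht.le]
    ring_nf
  calc 1 / √y ≤ 1 / √(c * t ^ r) :=
        one_div_le_one_div_of_le (by positivity) (sqrt_le_sqrt h)
    _ = (√c)⁻¹ * t ^ (-(r / 2)) := by rw [hsq, rpow_neg ht.le, one_div, mul_inv]

theorem inv_sqrt_mul_inv_le_one_div_sqrt {c t y : ℝ} (hy : 0 < y) (ht : 0 < t)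
    (h : y ≤ c * t ^ 2) : (√c)⁻¹ * t⁻¹ ≤ 1 / √y :=
  calc (√c)⁻¹ * t⁻¹ = 1 / √(c * t ^ 2) := by
        rw [sqrt_mul' c (sq_nonneg t), sqrt_sq ht.le, one_div, mul_inv]
    _ ≤ 1 / √y := one_div_le_one_div_of_le (sqrt_pos.2 hy) (sqrt_le_sqrt h)

theorem stmt_6_general (f f' : ℝ → ℝ) (m M : ℝ) (hm : 0 < m)
    (hderiv : ∀ t ∈ Ioi (0:ℝ), HasDerivAt f (f' t) t)
    (hmono : MonotoneOn f (Ici 0))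
    (hf0 : f 0 = 0)
    (hpos : ∀ t ∈ Ioi (0:ℝ), 0 < f t)
    (h : ∀ t ∈ Ioi (0:ℝ), (1 + m) * f t ≤ t * f' t ∧ t * f' t ≤ (1 + M) * f t)
    (F φ : ℝ → ℝ) (hF : ∀ t, F t = ∫ τ in (0:ℝ)..t, f τ)
    (hφ : ∀ u, φ u = ∫ t in Ioi u, 1 / Real.sqrt (F t)) :
    (∀ u ∈ Ioi (0:ℝ), 0 < φ u) ∧
    StrictAntiOn φ (Ioi 0) ∧
    Tendsto φ (nhdsWithin 0 (Ioi 0)) atTop ∧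
    Tendsto φ atTop (nhds 0) := by
  obtain rfl : φ = fun u => ∫ t in Ioi u, 1 / √(F t) := funext hφ
  have hf1 : 0 < f 1 := hpos 1 (mem_Ioi.2 one_pos)
  have hgrowth : ∀ t ∈ Ioi (0:ℝ), (1 + m) * f t ≤ t * f' t := fun t ht => (h t ht).1
  have hF_pos : ∀ t ∈ Ioi (0:ℝ), 0 < F t := fun t ht => hF t ▸
    (mul_pos (half_pos ht) (hpos _ (mem_Ioi.2 (half_pos ht)))).trans_le
      (half_mul_le_integral_zero hmono hf0 ht.le)
  have hg_pos : ∀ t ∈ Ioi (0:ℝ), 0 < 1 / √(F t) := fun t ht => by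
    have := hF_pos t ht
    positivity
  have hg_anti : AntitoneOn (fun t => 1 / √(F t)) (Ioi 0) := fun s hs t ht hst => by
    refine one_div_le_one_div_of_le (sqrt_pos.2 (hF_pos s hs)) (sqrt_le_sqrt ?_)
    simpa only [hF] using monotoneOn_integral_zero hmono hf0 (mem_Ici.2 (le_of_lt hs))
      (mem_Ici.2 (le_of_lt ht)) hst
  have hg_int_two : IntegrableOn (fun t => 1 / √(F t)) (Ioi 2) :=
    hg_anti.integrableOn_Ioi_of_le_rpow (fun t ht => (hg_pos t ht).le) two_pos
      (q := -((1 + m + 1) / 2)) (by linarith) fun t ht =>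
      one_div_sqrt_le_of_mul_rpow_le (by positivity) (two_pos.trans ht)
        (hF t ▸ mul_rpow_le_integral_zero hmono hf0 hderiv hgrowth (le_of_lt ht))
  have hg_int : ∀ u ∈ Ioi (0:ℝ), IntegrableOn (fun t => 1 / √(F t)) (Ioi u) :=
    fun u hu => hg_anti.integrableOn_Ioi hg_int_two hu
  have hg_near_zero (t : ℝ) (ht : t ∈ Ioc (0:ℝ) 1) : (√(f 1))⁻¹ * t⁻¹ ≤ 1 / √(F t) :=
    inv_sqrt_mul_inv_le_one_div_sqrt (hF_pos t ht.1) ht.1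
      (hF t ▸ integral_zero_le_mul_sq hmono hf0 hderiv hgrowth (by linarith) ht.1 ht.2)
  exact ⟨fun u hu => integral_Ioi_pos hg_int hg_pos hu, strictAntiOn_integral_Ioi hg_int hg_pos,
    tendsto_integral_Ioi_nhdsGT_zero hg_int (fun t ht => (hg_pos t ht).le)
      (by positivity) hg_near_zero,
    tendsto_integral_Ioi_atTop hg_int_two⟩

theorem stmt_6 (f f' : ℝ → ℝ) (m M : ℝ) (hm : 0 < m) (hmM : m < M)
    (hcont : ContinuousOn f (Ici 0))
    (hderiv : ∀ t ∈ Ioi (0:ℝ), HasDerivAt f (f' t) t)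
    (hmono : MonotoneOn f (Ici 0))
    (hf0 : f 0 = 0)
    (hpos : ∀ t ∈ Ioi (0:ℝ), 0 < f t)
    (h : ∀ t ∈ Ioi (0:ℝ), (1 + m) * f t ≤ t * f' t ∧ t * f' t ≤ (1 + M) * f t)
    (F φ : ℝ → ℝ) (hF : ∀ t, F t = ∫ τ in (0:ℝ)..t, f τ)
    (hφ : ∀ u, φ u = ∫ t in Ioi u, 1 / Real.sqrt (F t)) :
    (∀ u ∈ Ioi (0:ℝ), 0 < φ u) ∧
    StrictAntiOn φ (Ioi 0) ∧
    Tendsto φ (nhdsWithin 0 (Ioi 0)) atTop ∧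
    Tendsto φ atTop (nhds 0) :=
  stmt_6_general f f' m M hm hderiv hmono hf0 hpos h F φ hF hφ
end

section
/- With f, F, φ as in the Keller–Osserman setup, there exists a constant C > 0 such that for all u > 0, (1/C) √(u/f(u)) ≤ φ(u) ≤ C √(u/f(u)). -/
open Set Real MeasureTheory

/-!
The growth condition makes `f t / t ^ (1 + m)` increasing and `f t / t ^ (1 + M)` decreasing.
Hence `F t ≤ t f(t) ≤ (2 + M) F t`, and for `t ≥ u` the product `t f(t)` lies between
`u f(u) (t/u)^(2+m)` and `u f(u) (t/u)^(2+M)`. So on `(u, ∞)` the integrand `1/√F` is squeezed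
between two multiples of powers `(t/u)^(-p/2)` with `p > 2`, whose integrals are explicit multiples
of `u / √(u f(u)) = √(u / f(u))`.
-/

section RatioMonotonicity

variable {f f' : ℝ → ℝ} {c : ℝ}

theorem monotoneOn_div_rpow_of_mul_le_mul_deriv_s7
    (hf : ∀ t ∈ Ioi (0 : ℝ), HasDerivAt f (f' t) t)
    (hc : ∀ t ∈ Ioi (0 : ℝ), c * f t ≤ t * f' t) :
    MonotoneOn (fun t => f t / t ^ c) (Ioi 0) := by
  have hderiv : ∀ t ∈ Ioi (0 : ℝ), HasDerivAt (fun t => f t / t ^ c)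
      ((f' t * t ^ c - f t * (c * t ^ (c - 1))) / (t ^ c) ^ 2) t := fun t ht =>
    (hf t ht).div (hasDerivAt_rpow_const (Or.inl (ne_of_gt ht))) (rpow_pos_of_pos ht c).ne'
  refine monotoneOn_of_deriv_nonneg (convex_Ioi 0)
    (fun t ht => (hderiv t ht).continuousAt.continuousWithinAt)
    (fun t ht => (hderiv t (interior_subset ht)).differentiableAt.differentiableWithinAt)
    (fun t ht => ?_)
  rw [interior_Ioi] at ht
  rw [(hderiv t ht).deriv]
  have hpow : t ^ c = t * t ^ (c - 1) := by
    simpa only [rpow_one, add_sub_cancel] using rpow_add ht 1 (c - 1)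
  have hnum : 0 ≤ (t * f' t - c * f t) * t ^ (c - 1) :=
    mul_nonneg (sub_nonneg.2 (hc t ht)) (rpow_pos_of_pos ht _).le
  exact div_nonneg (by rw [hpow]; linarith) (sq_nonneg _)

theorem antitoneOn_div_rpow_of_mul_deriv_le_mul
    (hf : ∀ t ∈ Ioi (0 : ℝ), HasDerivAt f (f' t) t)
    (hc : ∀ t ∈ Ioi (0 : ℝ), t * f' t ≤ c * f t) :
    AntitoneOn (fun t => f t / t ^ c) (Ioi 0) := by
  have := monotoneOn_div_rpow_of_mul_le_mul_deriv_s7 (f := fun t => -f t) (f' := fun t => -f' t)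
    (fun t ht => (hf t ht).neg) (fun t ht => by linarith [hc t ht])
  exact fun a ha b hb hab => by simpa only [neg_div, neg_le_neg_iff] using this ha hb hab

theorem hasDerivAt_id_mul (hf : ∀ t ∈ Ioi (0 : ℝ), HasDerivAt f (f' t) t) :
    ∀ t ∈ Ioi (0 : ℝ), HasDerivAt (fun t => t * f t) (f t + t * f' t) t := fun t ht => by
  simpa using (hasDerivAt_id t).fun_mul (hf t ht)

theorem monotoneOn_mul_self_div_rpow (hf : ∀ t ∈ Ioi (0 : ℝ), HasDerivAt f (f' t) t)
    (hc : ∀ t ∈ Ioi (0 : ℝ), c * f t ≤ t * f' t) :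
    MonotoneOn (fun t => t * f t / t ^ (c + 1)) (Ioi 0) :=
  monotoneOn_div_rpow_of_mul_le_mul_deriv_s7 (hasDerivAt_id_mul hf) fun t ht => by
    nlinarith [hc t ht, ht.out]

theorem antitoneOn_mul_self_div_rpow (hf : ∀ t ∈ Ioi (0 : ℝ), HasDerivAt f (f' t) t)
    (hc : ∀ t ∈ Ioi (0 : ℝ), t * f' t ≤ c * f t) :
    AntitoneOn (fun t => t * f t / t ^ (c + 1)) (Ioi 0) :=
  antitoneOn_div_rpow_of_mul_deriv_le_mul (hasDerivAt_id_mul hf) fun t ht => by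
    nlinarith [hc t ht, ht.out]

variable {a b : ℝ}

theorem mul_div_rpow_le_of_monotoneOn (hf : MonotoneOn (fun t => f t / t ^ c) (Ioi 0))
    (ha : 0 < a) (hab : a ≤ b) : f a * (b / a) ^ c ≤ f b := by
  have hb := ha.trans_le hab
  calc f a * (b / a) ^ c = f a / a ^ c * b ^ c := by rw [div_rpow hb.le ha.le]; ring
    _ ≤ f b / b ^ c * b ^ c := mul_le_mul_of_nonneg_right (hf ha hb hab) (rpow_nonneg hb.le c)
    _ = f b := div_mul_cancel₀ _ (rpow_pos_of_pos hb c).ne'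

theorem le_mul_div_rpow_of_antitoneOn (hf : AntitoneOn (fun t => f t / t ^ c) (Ioi 0))
    (ha : 0 < a) (hab : a ≤ b) : f b ≤ f a * (b / a) ^ c := by
  have := mul_div_rpow_le_of_monotoneOn (f := fun t => -f t)
    (fun x hx y hy hxy => by simpa only [neg_div, neg_le_neg_iff] using hf hx hy hxy) ha hab
  linarith

end RatioMonotonicity

section Primitive

theorem integral_le_sub_mul_of_monotoneOn {f : ℝ → ℝ} {a b : ℝ} (hab : a ≤ b)
    (hf : MonotoneOn f (Icc a b)) : ∫ x in a..b, f x ≤ (b - a) * f b := by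
  have hle : ∫ x in a..b, f x ≤ ∫ _ in a..b, f b :=
    intervalIntegral.integral_mono_on hab (MonotoneOn.intervalIntegrable (by rwa [uIcc_of_le hab]))
      intervalIntegrable_const fun x hx => hf hx (right_mem_Icc.2 hab) hx.2
  simpa using hle

theorem mul_le_integral_of_antitoneOn_div_rpow {f : ℝ → ℝ} {c t : ℝ} (hc : -1 < c) (ht : 0 < t)
    (hf : AntitoneOn (fun s => f s / s ^ c) (Ioi 0)) (hfi : IntervalIntegrable f volume 0 t) :
    t * f t ≤ (c + 1) * ∫ s in 0..t, f s := by
  have hpow : ∀ s ∈ Ioo 0 t, f t / t ^ c * s ^ c ≤ f s := fun s hs => by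
    have := hf hs.1 ht hs.2.le
    rwa [← le_div_iff₀ (rpow_pos_of_pos hs.1 c)]
  have hint := intervalIntegral.integral_mono_on_of_le_Ioo ht.le
    ((intervalIntegral.intervalIntegrable_rpow' hc).const_mul _) hfi hpow
  rw [intervalIntegral.integral_const_mul, integral_rpow (Or.inl hc),
    zero_rpow (by linarith), sub_zero, rpow_add_one ht.ne'] at hint
  have hc1 : 0 < c + 1 := by linarith
  calc t * f t = (c + 1) * (f t / t ^ c * (t ^ c * t / (c + 1))) := by
        field_simp [(rpow_pos_of_pos ht c).ne']
    _ ≤ (c + 1) * ∫ s in 0..t, f s := mul_le_mul_of_nonneg_left hint hc1.le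

theorem monotoneOn_primitive_of_nonneg {f : ℝ → ℝ} {a : ℝ}
    (hfi : ∀ b, a ≤ b → IntervalIntegrable f volume a b) (hf : ∀ x ∈ Ioi a, 0 ≤ f x) :
    MonotoneOn (fun t => ∫ x in a..t, f x) (Ici a) := fun _ hs t ht hst =>
  intervalIntegral.integral_mono_interval le_rfl hs hst
    (ae_restrict_of_forall_mem measurableSet_Ioc fun x hx => hf x hx.1) (hfi t ht)

variable {f f' : ℝ → ℝ} {m M u t : ℝ}

theorem integral_le_mul_mul_div_rpow (hf : ∀ t ∈ Ioi (0 : ℝ), HasDerivAt f (f' t) t)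
    (hmono : MonotoneOn f (Ici 0)) (hM : ∀ t ∈ Ioi (0 : ℝ), t * f' t ≤ (1 + M) * f t)
    (hu : 0 < u) (hut : u ≤ t) :
    ∫ s in 0..t, f s ≤ u * f u * (t / u) ^ (2 + M) := by
  have hgrowth := le_mul_div_rpow_of_antitoneOn (antitoneOn_mul_self_div_rpow hf hM) hu hut
  calc ∫ s in 0..t, f s ≤ (t - 0) * f t :=
        integral_le_sub_mul_of_monotoneOn (hu.trans_le hut).le (hmono.mono Icc_subset_Ici_self)
    _ ≤ u * f u * (t / u) ^ (2 + M) := by rw [sub_zero]; convert hgrowth using 3; ring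

theorem mul_mul_div_rpow_le_integral (hf : ∀ t ∈ Ioi (0 : ℝ), HasDerivAt f (f' t) t)
    (hmono : MonotoneOn f (Ici 0)) (hm : ∀ t ∈ Ioi (0 : ℝ), (1 + m) * f t ≤ t * f' t)
    (hM : ∀ t ∈ Ioi (0 : ℝ), t * f' t ≤ (1 + M) * f t) (hM2 : 0 < 2 + M)
    (hu : 0 < u) (hut : u ≤ t) :
    u * f u / (2 + M) * (t / u) ^ (2 + m) ≤ ∫ s in 0..t, f s := by
  have ht := hu.trans_le hut
  have hgrowth := mul_div_rpow_le_of_monotoneOn (monotoneOn_mul_self_div_rpow hf hm) hu hut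
  have hprim := mul_le_integral_of_antitoneOn_div_rpow (by linarith) ht
    (antitoneOn_div_rpow_of_mul_deriv_le_mul hf hM)
    ((hmono.mono (by rw [uIcc_of_le ht.le]; exact Icc_subset_Ici_self)).intervalIntegrable)
  rw [div_mul_eq_mul_div, div_le_iff₀' hM2]
  calc u * f u * (t / u) ^ (2 + m) ≤ t * f t := by convert hgrowth using 3; ring
    _ ≤ (2 + M) * ∫ s in 0..t, f s := by convert hprim using 2; ring

end Primitive

section TailIntegrals

theorem one_div_sqrt_le_one_div_sqrt {x y : ℝ} (hx : 0 < x) (hxy : x ≤ y) : 1 / √y ≤ 1 / √x :=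
  one_div_le_one_div_of_le (sqrt_pos.2 hx) (sqrt_le_sqrt hxy)

variable {u K p : ℝ}

theorem one_div_sqrt_mul_rpow_eq (hK : 0 ≤ K) {x : ℝ} (hx : 0 ≤ x) :
    1 / √(K * x ^ p) = 1 / √K * x ^ (-(p / 2)) := by
  rw [sqrt_mul hK, sqrt_eq_rpow (x ^ p), ← rpow_mul hx, rpow_neg hx]
  ring_nf

theorem integrableOn_Ioi_one_div_sqrt_mul_div_rpow (hu : 0 < u) (hK : 0 ≤ K) (hp : 2 < p) :
    IntegrableOn (fun t => 1 / √(K * (t / u) ^ p)) (Ioi u) := by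
  have hint : IntegrableOn (fun t => (u⁻¹ * t) ^ (-(p / 2))) (Ioi u) := by
    rw [integrableOn_Ioi_comp_mul_left_iff (fun t => t ^ (-(p / 2))) u (inv_pos.2 hu)]
    exact integrableOn_Ioi_rpow_of_lt (by linarith) (by positivity)
  refine IntegrableOn.congr_fun (hint.const_mul (1 / √K)) (fun t ht => ?_) measurableSet_Ioi
  rw [one_div_sqrt_mul_rpow_eq hK (div_nonneg (hu.trans ht).le hu.le), div_eq_inv_mul t]

theorem integral_Ioi_one_div_sqrt_mul_div_rpow (hu : 0 < u) (hK : 0 < K) (hp : 2 < p) :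
    ∫ t in Ioi u, 1 / √(K * (t / u) ^ p) = 2 / (p - 2) * √(u ^ 2 / K) := by
  have hcongr : ∫ t in Ioi u, 1 / √(K * (t / u) ^ p) =
      ∫ t in Ioi u, 1 / √K * (u⁻¹ * t) ^ (-(p / 2)) :=
    setIntegral_congr_fun measurableSet_Ioi fun t ht => by
      rw [one_div_sqrt_mul_rpow_eq hK.le (div_nonneg (hu.trans ht).le hu.le), div_eq_inv_mul t]
  rw [hcongr, integral_const_mul, integral_comp_mul_left_Ioi (fun t => t ^ (-(p / 2))) u
    (inv_pos.2 hu), inv_mul_cancel₀ hu.ne', integral_Ioi_rpow_of_lt (by linarith) one_pos,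
    one_rpow, sqrt_div' _ hK.le, sqrt_sq hu.le, inv_inv, smul_eq_mul]
  rw [show -(p / 2) + 1 = -((p - 2) / 2) by ring]
  field_simp

variable {G : ℝ → ℝ}

theorem integrableOn_Ioi_one_div_sqrt_of_mul_div_rpow_le (hu : 0 < u) (hK : 0 < K) (hp : 2 < p)
    (hG : AEMeasurable G (volume.restrict (Ioi u))) (hlow : ∀ t ∈ Ioi u, K * (t / u) ^ p ≤ G t) :
    IntegrableOn (fun t => 1 / √(G t)) (Ioi u) := by
  refine (integrableOn_Ioi_one_div_sqrt_mul_div_rpow hu hK.le hp).mono'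
    (hG.sqrt.const_div 1).aestronglyMeasurable ?_
  refine ae_restrict_of_forall_mem measurableSet_Ioi fun t ht => ?_
  have hpos : 0 < K * (t / u) ^ p := by have := hu.trans ht; positivity
  rw [norm_of_nonneg (by positivity)]
  exact one_div_sqrt_le_one_div_sqrt hpos (hlow t ht)

theorem integral_Ioi_one_div_sqrt_le_of_mul_div_rpow_le (hu : 0 < u) (hK : 0 < K) (hp : 2 < p)
    (hG : AEMeasurable G (volume.restrict (Ioi u))) (hlow : ∀ t ∈ Ioi u, K * (t / u) ^ p ≤ G t) :
    ∫ t in Ioi u, 1 / √(G t) ≤ 2 / (p - 2) * √(u ^ 2 / K) := by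
  rw [← integral_Ioi_one_div_sqrt_mul_div_rpow hu hK hp]
  refine setIntegral_mono_on (integrableOn_Ioi_one_div_sqrt_of_mul_div_rpow_le hu hK hp hG hlow)
    (integrableOn_Ioi_one_div_sqrt_mul_div_rpow hu hK.le hp) measurableSet_Ioi fun t ht => ?_
  have hpos : 0 < K * (t / u) ^ p := by have := hu.trans ht; positivity
  exact one_div_sqrt_le_one_div_sqrt hpos (hlow t ht)

theorem le_integral_Ioi_one_div_sqrt_of_le_mul_div_rpow (hu : 0 < u) (hK : 0 < K) (hp : 2 < p)
    (hint : IntegrableOn (fun t => 1 / √(G t)) (Ioi u)) (hG : ∀ t ∈ Ioi u, 0 < G t)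
    (hup : ∀ t ∈ Ioi u, G t ≤ K * (t / u) ^ p) :
    2 / (p - 2) * √(u ^ 2 / K) ≤ ∫ t in Ioi u, 1 / √(G t) := by
  rw [← integral_Ioi_one_div_sqrt_mul_div_rpow hu hK hp]
  exact setIntegral_mono_on (integrableOn_Ioi_one_div_sqrt_mul_div_rpow hu hK.le hp) hint
    measurableSet_Ioi fun t ht => one_div_sqrt_le_one_div_sqrt (hG t ht) (hup t ht)

theorem integral_Ioi_one_div_sqrt_mem_Icc {K₁ K₂ q : ℝ} (hu : 0 < u) (hK₁ : 0 < K₁) (hK₂ : 0 < K₂)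
    (hp : 2 < p) (hq : 2 < q) (hG : AEMeasurable G (volume.restrict (Ioi u)))
    (hlow : ∀ t ∈ Ioi u, K₁ * (t / u) ^ p ≤ G t) (hup : ∀ t ∈ Ioi u, G t ≤ K₂ * (t / u) ^ q) :
    ∫ t in Ioi u, 1 / √(G t) ∈ Icc (2 / (q - 2) * √(u ^ 2 / K₂)) (2 / (p - 2) * √(u ^ 2 / K₁)) :=
  ⟨le_integral_Ioi_one_div_sqrt_of_le_mul_div_rpow hu hK₂ hq
    (integrableOn_Ioi_one_div_sqrt_of_mul_div_rpow_le hu hK₁ hp hG hlow)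
    (fun t ht => (mul_pos hK₁ (rpow_pos_of_pos (div_pos (hu.trans ht) hu) _)).trans_le (hlow t ht))
    hup,
  integral_Ioi_one_div_sqrt_le_of_mul_div_rpow_le hu hK₁ hp hG hlow⟩

end TailIntegrals

theorem stmt_7_general (f f' : ℝ → ℝ) (m M : ℝ) (hm : 0 < m) (hmM : m < M)
    (hderiv : ∀ t ∈ Ioi (0:ℝ), HasDerivAt f (f' t) t)
    (hmono : MonotoneOn f (Ici 0))
    (hpos : ∀ t ∈ Ioi (0:ℝ), 0 < f t)
    (h : ∀ t ∈ Ioi (0:ℝ), (1 + m) * f t ≤ t * f' t ∧ t * f' t ≤ (1 + M) * f t)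
    (F φ : ℝ → ℝ) (hF : ∀ t, F t = ∫ τ in (0:ℝ)..t, f τ)
    (hφ : ∀ u, φ u = ∫ t in Ioi u, 1 / Real.sqrt (F t)) :
    ∃ C : ℝ, 0 < C ∧ ∀ u ∈ Ioi (0:ℝ),
      (1 / C) * Real.sqrt (u / f u) ≤ φ u ∧ φ u ≤ C * Real.sqrt (u / f u) := by
  have hM : 0 < M := hm.trans hmM
  have hF_mono : MonotoneOn F (Ici 0) := by
    simpa only [← hF] using monotoneOn_primitive_of_nonneg (fun b hb =>
      (hmono.mono (by rw [uIcc_of_le hb]; exact Icc_subset_Ici_self)).intervalIntegrable)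
      fun x hx => (hpos x hx).le
  refine ⟨max (2 / m * √(2 + M)) (M / 2), by positivity, fun u (hu : 0 < u) => ?_⟩
  have hfu := hpos u hu
  obtain ⟨hlower, hupper⟩ := integral_Ioi_one_div_sqrt_mem_Icc (G := F) hu
    (K₁ := u * f u / (2 + M)) (K₂ := u * f u) (by positivity) (by positivity)
    (by linarith) (by linarith)
    (aemeasurable_restrict_of_monotoneOn measurableSet_Ioi (hF_mono.mono (Ioi_subset_Ici hu.le)))
    (fun t ht => hF t ▸ mul_mul_div_rpow_le_integral hderiv hmono (fun t ht => (h t ht).1)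
      (fun t ht => (h t ht).2) (by linarith) hu ht.out.le)
    (fun t ht => hF t ▸ integral_le_mul_mul_div_rpow hderiv hmono (fun t ht => (h t ht).2) hu
      ht.out.le)
  rw [← hφ, add_sub_cancel_left, show u ^ 2 / (u * f u / (2 + M)) = (2 + M) * (u / f u) by
    field_simp, sqrt_mul (by linarith), ← mul_assoc] at hupper
  rw [← hφ, add_sub_cancel_left, show u ^ 2 / (u * f u) = u / f u by field_simp] at hlower
  have hs : 0 ≤ √(u / f u) := sqrt_nonneg _
  constructor
  · refine le_trans (mul_le_mul_of_nonneg_right ?_ hs) hlower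
    simpa only [one_div_div] using
      one_div_le_one_div_of_le (by positivity : 0 < M / 2) (le_max_right (2 / m * √(2 + M)) _)
  · exact hupper.trans (mul_le_mul_of_nonneg_right (le_max_left _ _) hs)

theorem stmt_7 (f f' : ℝ → ℝ) (m M : ℝ) (hm : 0 < m) (hmM : m < M)
    (hcont : ContinuousOn f (Ici 0))
    (hderiv : ∀ t ∈ Ioi (0:ℝ), HasDerivAt f (f' t) t)
    (hmono : MonotoneOn f (Ici 0))
    (hf0 : f 0 = 0)
    (hpos : ∀ t ∈ Ioi (0:ℝ), 0 < f t)
    (h : ∀ t ∈ Ioi (0:ℝ), (1 + m) * f t ≤ t * f' t ∧ t * f' t ≤ (1 + M) * f t)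
    (F φ : ℝ → ℝ) (hF : ∀ t, F t = ∫ τ in (0:ℝ)..t, f τ)
    (hφ : ∀ u, φ u = ∫ t in Ioi u, 1 / Real.sqrt (F t)) :
    ∃ C : ℝ, 0 < C ∧ ∀ u ∈ Ioi (0:ℝ),
      (1 / C) * Real.sqrt (u / f u) ≤ φ u ∧ φ u ≤ C * Real.sqrt (u / f u) :=
  stmt_7_general f f' m M hm hmM hderiv hmono hpos h F φ hF hφ
end

section
/- With f, F, φ as in the Keller–Osserman setup and s ∈ (0,1), the condition ∫₁^∞ φ(t)^{1/s} dt < ∞ holds if and only if ∫₁^∞ (t/f(t))^{1/(2s)} dt < ∞. -/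
/-!
Since `(1 + m) f ≤ t f' ≤ (1 + M) f`, the ratios `f t / t ^ (1 + m)` and `f t / t ^ (1 + M)` are
respectively increasing and decreasing. Integrating these comparisons over `[0, t]` gives
`(2 + m) F ≤ t f ≤ (2 + M) F`, so `F` (whose derivative is `f`) satisfies the same kind of growth
condition with both exponents raised by one. Bounding `1 / √F` on `(u, ∞)` by
`(u / t) ^ ((2 + m) / 2) / √(F u)` from above, and on `(u, 2u]` by its value at `2u` from below,
gives `φ u ≍ u / √(F u) ≍ √(u / f u)` with constants depending only on `m` and `M`. Hence
`φ ^ (1 / s)` and `(t / f t) ^ (1 / (2 s)) = √(t / f t) ^ (1 / s)` are comparable on `(1, ∞)`.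
-/

open Set Real MeasureTheory

section Growth

variable {f f' : ℝ → ℝ} {c : ℝ}

theorem hasDerivAt_mul_rpow_neg {x : ℝ} (hf : HasDerivAt f (f' x) x) (hx : 0 < x) :
    HasDerivAt (fun y => f y * y ^ (-c)) ((x * f' x - c * f x) * x ^ (-c - 1)) x := by
  refine (hf.mul (hasDerivAt_rpow_const (p := -c) (Or.inl hx.ne'))).congr_deriv ?_
  rw [rpow_sub_one hx.ne']
  field_simp
  ring

theorem continuousOn_mul_rpow_neg (hderiv : ∀ t ∈ Ioi (0:ℝ), HasDerivAt f (f' t) t) :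
    ContinuousOn (fun y => f y * y ^ (-c)) (Ioi 0) := fun x hx =>
  (hasDerivAt_mul_rpow_neg (hderiv x hx) hx).continuousAt.continuousWithinAt

theorem monotoneOn_mul_rpow_neg (hderiv : ∀ t ∈ Ioi (0:ℝ), HasDerivAt f (f' t) t)
    (hc : ∀ t ∈ Ioi (0:ℝ), c * f t ≤ t * f' t) :
    MonotoneOn (fun x => f x * x ^ (-c)) (Ioi 0) := by
  refine monotoneOn_of_hasDerivWithinAt_nonneg (convex_Ioi 0)
    (f' := fun x => (x * f' x - c * f x) * x ^ (-c - 1))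
    (continuousOn_mul_rpow_neg hderiv) ?_ ?_ <;>
    rw [interior_Ioi] <;> intro x hx
  · exact (hasDerivAt_mul_rpow_neg (hderiv x hx) hx).hasDerivWithinAt
  · exact mul_nonneg (sub_nonneg.2 (hc x hx)) (rpow_nonneg (le_of_lt hx) _)

theorem antitoneOn_mul_rpow_neg (hderiv : ∀ t ∈ Ioi (0:ℝ), HasDerivAt f (f' t) t)
    (hc : ∀ t ∈ Ioi (0:ℝ), t * f' t ≤ c * f t) :
    AntitoneOn (fun x => f x * x ^ (-c)) (Ioi 0) := by
  refine antitoneOn_of_hasDerivWithinAt_nonpos (convex_Ioi 0)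
    (f' := fun x => (x * f' x - c * f x) * x ^ (-c - 1))
    (continuousOn_mul_rpow_neg hderiv) ?_ ?_ <;>
    rw [interior_Ioi] <;> intro x hx
  · exact (hasDerivAt_mul_rpow_neg (hderiv x hx) hx).hasDerivWithinAt
  · exact mul_nonpos_of_nonpos_of_nonneg (sub_nonpos.2 (hc x hx)) (rpow_nonneg (le_of_lt hx) _)

theorem MonotoneOn.le_mul_div_rpow (hmono : MonotoneOn (fun x => f x * x ^ (-c)) (Ioi 0))
    {u t : ℝ} (hu : 0 < u) (hut : u ≤ t) : f u ≤ f t * (u / t) ^ c := by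
  have ht := hu.trans_le hut
  have h : f u * u ^ (-c) ≤ f t * t ^ (-c) := hmono hu ht hut
  rw [rpow_neg hu.le, rpow_neg ht.le, ← div_eq_mul_inv, ← div_eq_mul_inv,
    div_le_div_iff₀ (by positivity) (by positivity)] at h
  rw [div_rpow hu.le ht.le, mul_div_assoc', le_div_iff₀ (by positivity)]
  linarith

theorem AntitoneOn.mul_div_rpow_le (hanti : AntitoneOn (fun x => f x * x ^ (-c)) (Ioi 0))
    {u t : ℝ} (hu : 0 < u) (hut : u ≤ t) : f t * (u / t) ^ c ≤ f u := by
  have ht := hu.trans_le hut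
  have h : f t * t ^ (-c) ≤ f u * u ^ (-c) := hanti hu ht hut
  rw [rpow_neg hu.le, rpow_neg ht.le, ← div_eq_mul_inv, ← div_eq_mul_inv,
    div_le_div_iff₀ (by positivity) (by positivity)] at h
  rw [div_rpow hu.le ht.le, mul_div_assoc', div_le_iff₀ (by positivity)]
  linarith

end Growth

section Primitive

variable {f : ℝ → ℝ} {c t : ℝ}

theorem intervalIntegrable_div_rpow (hc : -1 < c) :
    IntervalIntegrable (fun τ => (τ / t) ^ c) volume 0 t := by
  simpa [div_eq_mul_inv] using
    (intervalIntegral.intervalIntegrable_rpow' (a := 0) (b := 1) hc).comp_mul_right (c := t⁻¹)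

theorem integral_div_rpow (hc : -1 < c) (ht : t ≠ 0) :
    ∫ τ in (0:ℝ)..t, (τ / t) ^ c = t / (c + 1) := by
  rw [intervalIntegral.integral_comp_div (fun x => x ^ c) ht, zero_div, div_self ht,
    integral_rpow (Or.inl hc), one_rpow, zero_rpow (by linarith : c + 1 ≠ 0), smul_eq_mul]
  ring

theorem one_add_mul_integral_mul_div_rpow (hc : -1 < c) (ht : 0 < t) :
    (1 + c) * ∫ τ in (0:ℝ)..t, f t * (τ / t) ^ c = t * f t := by
  have : 1 + c ≠ 0 := by linarith
  rw [intervalIntegral.integral_const_mul, integral_div_rpow hc ht.ne', add_comm c 1]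
  field_simp

theorem one_add_mul_integral_le (hmono : MonotoneOn (fun x => f x * x ^ (-c)) (Ioi 0))
    (hc : -1 < c) (hcont : ContinuousOn f (Icc 0 t)) (ht : 0 < t) :
    (1 + c) * ∫ τ in (0:ℝ)..t, f τ ≤ t * f t := by
  rw [← one_add_mul_integral_mul_div_rpow hc ht]
  gcongr (1 + c) * ?_
  · linarith
  exact intervalIntegral.integral_mono_on_of_le_Ioo ht.le (hcont.intervalIntegrable_of_Icc ht.le)
    ((intervalIntegrable_div_rpow hc).const_mul _) fun τ hτ => hmono.le_mul_div_rpow hτ.1 hτ.2.le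

theorem le_one_add_mul_integral (hanti : AntitoneOn (fun x => f x * x ^ (-c)) (Ioi 0))
    (hc : -1 < c) (hcont : ContinuousOn f (Icc 0 t)) (ht : 0 < t) :
    t * f t ≤ (1 + c) * ∫ τ in (0:ℝ)..t, f τ := by
  rw [← one_add_mul_integral_mul_div_rpow hc ht]
  gcongr (1 + c) * ?_
  · linarith
  exact intervalIntegral.integral_mono_on_of_le_Ioo ht.le
    ((intervalIntegrable_div_rpow hc).const_mul _) (hcont.intervalIntegrable_of_Icc ht.le)
    fun τ hτ => hanti.mul_div_rpow_le hτ.1 hτ.2.le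

theorem hasDerivAt_integral_of_continuousOn (hcont : ContinuousOn f (Ici 0)) (ht : 0 < t) :
    HasDerivAt (fun x => ∫ τ in (0:ℝ)..x, f τ) (f t) t :=
  intervalIntegral.integral_hasDerivAt_right
    ((hcont.mono Icc_subset_Ici_self).intervalIntegrable_of_Icc ht.le)
    ((hcont.mono Ioi_subset_Ici_self).stronglyMeasurableAtFilter isOpen_Ioi t ht)
    (hcont.continuousAt (Ici_mem_nhds ht))

end Primitive

section Tail

variable {G : ℝ → ℝ} {c u : ℝ}

theorem eqOn_div_rpow (hu : 0 < u) :
    EqOn (fun t => (u / t) ^ c) (fun t => u ^ c * t ^ (-c)) (Ioi u) := fun t (ht : u < t) => by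
  show (u / t) ^ c = u ^ c * t ^ (-c)
  rw [div_rpow hu.le (hu.trans ht).le, rpow_neg (hu.trans ht).le, div_eq_mul_inv]

theorem integrableOn_Ioi_div_rpow (hc : 1 < c) (hu : 0 < u) :
    IntegrableOn (fun t => (u / t) ^ c) (Ioi u) :=
  (integrableOn_congr_fun (eqOn_div_rpow hu) measurableSet_Ioi).2
    ((integrableOn_Ioi_rpow_of_lt (by linarith : -c < -1) hu).const_mul _)

theorem integral_Ioi_div_rpow (hc : 1 < c) (hu : 0 < u) :
    ∫ t in Ioi u, (u / t) ^ c = u / (c - 1) := by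
  rw [setIntegral_congr_fun measurableSet_Ioi (eqOn_div_rpow hu), integral_const_mul,
    integral_Ioi_rpow_of_lt (by linarith) hu, rpow_add hu, rpow_one, rpow_neg hu.le]
  have : 0 < u ^ c := by positivity
  have : -c + 1 ≠ 0 := by linarith
  have : c - 1 ≠ 0 := by linarith
  field_simp
  ring

theorem one_div_sqrt_le_of_monotoneOn (hmono : MonotoneOn (fun x => G x * x ^ (-c)) (Ioi 0))
    (hG : ∀ t ∈ Ioi (0:ℝ), 0 < G t) (hu : 0 < u) {t : ℝ} (hut : u ≤ t) :
    1 / √(G t) ≤ (u / t) ^ (c / 2) / √(G u) := by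
  have ht := hu.trans_le hut
  have hsqrt : √(G u) ≤ √(G t) * (u / t) ^ (c / 2) := by
    calc √(G u) ≤ √(G t * (u / t) ^ c) := sqrt_le_sqrt (hmono.le_mul_div_rpow hu hut)
      _ = √(G t) * (u / t) ^ (c / 2) := by
        rw [sqrt_mul (hG t ht).le, sqrt_eq_rpow ((u / t) ^ c), ← rpow_mul (by positivity)]
        ring_nf
  rw [div_le_div_iff₀ (sqrt_pos.2 (hG t ht)) (sqrt_pos.2 (hG u hu))]
  linarith

theorem integrableOn_Ioi_one_div_sqrt (hmono : MonotoneOn (fun x => G x * x ^ (-c)) (Ioi 0))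
    (hc : 2 < c) (hG : ∀ t ∈ Ioi (0:ℝ), 0 < G t) (hGc : ContinuousOn G (Ioi 0)) (hu : 0 < u) :
    IntegrableOn (fun t => 1 / √(G t)) (Ioi u) := by
  have hsub : Ioi u ⊆ Ioi 0 := Ioi_subset_Ioi hu.le
  have hcont : ContinuousOn (fun t => 1 / √(G t)) (Ioi u) :=
    continuousOn_const.div (hGc.mono hsub).sqrt fun t ht => (sqrt_pos.2 (hG t (hsub ht))).ne'
  refine Integrable.mono' ((integrableOn_Ioi_div_rpow (c := c / 2) (by linarith) hu).div_const
    (√(G u))) (hcont.aestronglyMeasurable measurableSet_Ioi) ?_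
  refine ae_restrict_of_forall_mem measurableSet_Ioi fun t ht => ?_
  rw [norm_of_nonneg (by positivity)]
  exact one_div_sqrt_le_of_monotoneOn hmono hG hu (le_of_lt ht)

theorem integral_Ioi_one_div_sqrt_le (hmono : MonotoneOn (fun x => G x * x ^ (-c)) (Ioi 0))
    (hc : 2 < c) (hG : ∀ t ∈ Ioi (0:ℝ), 0 < G t) (hGc : ContinuousOn G (Ioi 0)) (hu : 0 < u) :
    ∫ t in Ioi u, 1 / √(G t) ≤ 2 / (c - 2) * (u / √(G u)) := by
  have hint := (integrableOn_Ioi_div_rpow (c := c / 2) (by linarith) hu).div_const (√(G u))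
  calc ∫ t in Ioi u, 1 / √(G t) ≤ ∫ t in Ioi u, (u / t) ^ (c / 2) / √(G u) :=
        setIntegral_mono_on (integrableOn_Ioi_one_div_sqrt hmono hc hG hGc hu) hint
          measurableSet_Ioi fun t ht => one_div_sqrt_le_of_monotoneOn hmono hG hu (le_of_lt ht)
    _ = 2 / (c - 2) * (u / √(G u)) := by
      have : c - 2 ≠ 0 := by linarith
      rw [integral_div, integral_Ioi_div_rpow (by linarith) hu]
      field_simp

theorem mul_div_sqrt_le_integral_Ioi_one_div_sqrt
    (hanti : AntitoneOn (fun x => G x * x ^ (-c)) (Ioi 0)) (hc : 0 ≤ c)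
    (hG : ∀ t ∈ Ioi (0:ℝ), 0 < G t) (hu : 0 < u)
    (hint : IntegrableOn (fun t => 1 / √(G t)) (Ioi u)) :
    √((1 / 2) ^ c) * (u / √(G u)) ≤ ∫ t in Ioi u, 1 / √(G t) := by
  have hpt : ∀ t ∈ Ioc u (2 * u), √((1 / 2) ^ c) / √(G u) ≤ 1 / √(G t) := by
    intro t ⟨hut, ht2u⟩
    have ht := hu.trans hut
    have hhalf : (1 / 2 : ℝ) ^ c ≤ (u / t) ^ c :=
      rpow_le_rpow (by norm_num) (by rw [le_div_iff₀ ht]; linarith) hc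
    have hsqrt : √(G t) * √((1 / 2) ^ c) ≤ √(G u) := by
      rw [← sqrt_mul (hG t ht).le]
      exact sqrt_le_sqrt ((mul_le_mul_of_nonneg_left hhalf (hG t ht).le).trans
        (hanti.mul_div_rpow_le hu hut.le))
    rw [div_le_div_iff₀ (sqrt_pos.2 (hG u hu)) (sqrt_pos.2 (hG t ht))]
    linarith
  calc √((1 / 2) ^ c) * (u / √(G u)) = ∫ _ in Ioc u (2 * u), √((1 / 2) ^ c) / √(G u) := by
        rw [setIntegral_const, Real.volume_real_Ioc_of_le (by linarith), smul_eq_mul]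
        ring
    _ ≤ ∫ t in Ioc u (2 * u), 1 / √(G t) :=
        setIntegral_mono_on (integrableOn_const measure_Ioc_lt_top.ne)
          (hint.mono_set Ioc_subset_Ioi_self) measurableSet_Ioc hpt
    _ ≤ ∫ t in Ioi u, 1 / √(G t) :=
        setIntegral_mono_set hint (ae_of_all _ fun t => by positivity)
          Ioc_subset_Ioi_self.eventuallyLE

end Tail

theorem rpow_one_div_two_mul {x : ℝ} (hx : 0 ≤ x) (s : ℝ) :
    x ^ (1 / (2 * s)) = √x ^ (1 / s) := by
  rw [sqrt_eq_rpow, ← rpow_mul hx]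
  ring_nf

theorem div_sqrt_eq_sqrt_mul_sqrt_div {u a b : ℝ} (hu : 0 ≤ u) (ha : 0 < a) (hb : 0 < b) :
    u / √a = √(u * b / a) * √(u / b) := by
  rw [← sqrt_mul (by positivity), show u * b / a * (u / b) = u ^ 2 / a by field_simp,
    sqrt_div' _ ha.le, sqrt_sq hu]

theorem integrableOn_Ioi_one_div_sqrt_and_integral_mem_Icc {G g : ℝ → ℝ} {c C u : ℝ}
    (hc : 2 < c) (hderiv : ∀ t ∈ Ioi (0:ℝ), HasDerivAt G (g t) t) (hG : ∀ t ∈ Ioi (0:ℝ), 0 < G t)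
    (hgrowth : ∀ t ∈ Ioi (0:ℝ), c * G t ≤ t * g t ∧ t * g t ≤ C * G t) (hu : 0 < u) :
    IntegrableOn (fun t => 1 / √(G t)) (Ioi u) ∧ ∫ t in Ioi u, 1 / √(G t) ∈
      Icc (√((1 / 2) ^ C) * √c * √(u / g u)) (2 / (c - 2) * √C * √(u / g u)) := by
  have hmono := monotoneOn_mul_rpow_neg hderiv fun t ht => (hgrowth t ht).1
  have hanti := antitoneOn_mul_rpow_neg hderiv fun t ht => (hgrowth t ht).2
  have hGc : ContinuousOn G (Ioi 0) := fun t ht => (hderiv t ht).continuousAt.continuousWithinAt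
  have hgu : 0 < g u := by nlinarith [hgrowth u hu, hG u hu]
  have hcC : c ≤ C := le_of_mul_le_mul_right ((hgrowth u hu).1.trans (hgrowth u hu).2) (hG u hu)
  have hint := integrableOn_Ioi_one_div_sqrt hmono hc hG hGc hu
  have hlow := mul_div_sqrt_le_integral_Ioi_one_div_sqrt hanti (by linarith) hG hu hint
  have hup := integral_Ioi_one_div_sqrt_le hmono hc hG hGc hu
  rw [div_sqrt_eq_sqrt_mul_sqrt_div hu.le (hG u hu) hgu] at hlow hup
  have hc' : √c ≤ √(u * g u / G u) :=
    sqrt_le_sqrt ((le_div_iff₀ (hG u hu)).2 (hgrowth u hu).1)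
  have hC' : √(u * g u / G u) ≤ √C :=
    sqrt_le_sqrt ((div_le_iff₀ (hG u hu)).2 (hgrowth u hu).2)
  have : 0 < 2 / (c - 2) := div_pos two_pos (by linarith)
  refine ⟨hint, le_trans ?_ hlow, hup.trans ?_⟩ <;> rw [mul_assoc] <;> gcongr

theorem integrableOn_rpow_of_mul_le {α : Type*} [MeasurableSpace α] {μ : Measure α} {s : Set α}
    {g h : α → ℝ} {a p : ℝ} (hs : MeasurableSet s) (ha : 0 < a) (hp : 0 ≤ p)
    (hg : AEMeasurable g (μ.restrict s)) (hg0 : ∀ x ∈ s, 0 ≤ g x) (hle : ∀ x ∈ s, a * g x ≤ h x)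
    (hint : IntegrableOn (fun x => h x ^ p) s μ) : IntegrableOn (fun x => g x ^ p) s μ := by
  refine Integrable.mono' (hint.const_mul (a ^ p)⁻¹) (hg.pow_const p).aestronglyMeasurable
    (ae_restrict_of_forall_mem hs fun x hx => ?_)
  rw [norm_of_nonneg (rpow_nonneg (hg0 x hx) p), le_inv_mul_iff₀ (rpow_pos_of_pos ha p),
    ← mul_rpow ha.le (hg0 x hx)]
  exact rpow_le_rpow (mul_nonneg ha.le (hg0 x hx)) (hle x hx) hp

theorem integrableOn_rpow_iff_of_mem_Icc {α : Type*} [MeasurableSpace α] {μ : Measure α}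
    {s : Set α} {g h : α → ℝ} {a b p : ℝ} (hs : MeasurableSet s) (ha : 0 < a) (hb : 0 < b)
    (hp : 0 ≤ p) (hg : AEMeasurable g (μ.restrict s)) (hh : AEMeasurable h (μ.restrict s))
    (hg0 : ∀ x ∈ s, 0 ≤ g x) (hgh : ∀ x ∈ s, h x ∈ Icc (a * g x) (b * g x)) :
    IntegrableOn (fun x => h x ^ p) s μ ↔ IntegrableOn (fun x => g x ^ p) s μ :=
  ⟨integrableOn_rpow_of_mul_le hs ha hp hg hg0 fun x hx => (hgh x hx).1,
    integrableOn_rpow_of_mul_le hs (inv_pos.2 hb) hp hh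
      (fun x hx => (mul_nonneg ha.le (hg0 x hx)).trans (hgh x hx).1)
      fun x hx => (inv_mul_le_iff₀ hb).2 (hgh x hx).2⟩

theorem antitoneOn_integral_Ioi {g : ℝ → ℝ} {s : Set ℝ} (hg : ∀ t, 0 ≤ g t)
    (hint : ∀ u ∈ s, IntegrableOn g (Ioi u)) : AntitoneOn (fun u => ∫ t in Ioi u, g t) s :=
  fun u hu _ _ huv =>
    setIntegral_mono_set (hint u hu) (ae_of_all _ fun t => hg t) (Ioi_subset_Ioi huv).eventuallyLE

theorem stmt_8_general (f f' : ℝ → ℝ) (m M s : ℝ) (hm : 0 < m) (hmM : m < M)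
    (hs : s ∈ Ioo (0:ℝ) 1)
    (hcont : ContinuousOn f (Ici 0))
    (hderiv : ∀ t ∈ Ioi (0:ℝ), HasDerivAt f (f' t) t)
    (hpos : ∀ t ∈ Ioi (0:ℝ), 0 < f t)
    (h : ∀ t ∈ Ioi (0:ℝ), (1 + m) * f t ≤ t * f' t ∧ t * f' t ≤ (1 + M) * f t)
    (F φ : ℝ → ℝ) (hF : ∀ t, F t = ∫ τ in (0:ℝ)..t, f τ)
    (hφ : ∀ u, φ u = ∫ t in Ioi u, 1 / Real.sqrt (F t)) :
    IntegrableOn (fun t => φ t ^ (1 / s)) (Ioi 1) ↔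
      IntegrableOn (fun t => (t / f t) ^ (1 / (2 * s))) (Ioi 1) := by
  have hF' : ∀ t ∈ Ioi (0:ℝ), HasDerivAt F (f t) t := fun t ht =>
    funext hF ▸ hasDerivAt_integral_of_continuousOn hcont ht
  have hfmono := monotoneOn_mul_rpow_neg hderiv fun t ht => (h t ht).1
  have hfanti := antitoneOn_mul_rpow_neg hderiv fun t ht => (h t ht).2
  have hFf : ∀ t ∈ Ioi (0:ℝ), (1 + (1 + m)) * F t ≤ t * f t ∧ t * f t ≤ (1 + (1 + M)) * F t :=
    fun t ht => hF t ▸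
      ⟨one_add_mul_integral_le hfmono (by linarith) (hcont.mono Icc_subset_Ici_self) ht,
        le_one_add_mul_integral hfanti (by linarith) (hcont.mono Icc_subset_Ici_self) ht⟩
  have hFpos : ∀ t ∈ Ioi (0:ℝ), 0 < F t := fun t ht =>
    pos_of_mul_pos_right ((mul_pos ht (hpos t ht)).trans_le (hFf t ht).2) (by linarith)
  have hφu (u : ℝ) (hu : u ∈ Ioi (1:ℝ)) := hφ u ▸
    integrableOn_Ioi_one_div_sqrt_and_integral_mem_Icc (by linarith) hF' hFpos hFf
      (zero_lt_one.trans hu)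
  have hφanti : AntitoneOn φ (Ioi 1) := funext hφ ▸
    antitoneOn_integral_Ioi (fun t => by positivity) fun u hu => (hφu u hu).1
  have hsub : Ioi (1:ℝ) ⊆ Ioi 0 := Ioi_subset_Ioi zero_le_one
  have hsqrt : EqOn (fun t => (t / f t) ^ (1 / (2 * s))) (fun t => √(t / f t) ^ (1 / s)) (Ioi 1) :=
    fun t ht => rpow_one_div_two_mul (div_nonneg (hsub ht).le (hpos t (hsub ht)).le) s
  rw [integrableOn_congr_fun hsqrt measurableSet_Ioi]
  refine integrableOn_rpow_iff_of_mem_Icc measurableSet_Ioi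
    (mul_pos (sqrt_pos.2 (by positivity)) (sqrt_pos.2 (by linarith)))
    (mul_pos (div_pos two_pos (by linarith)) (sqrt_pos.2 (by linarith))) (one_div_pos.2 hs.1).le
    ((continuousOn_id.div (hcont.mono (hsub.trans Ioi_subset_Ici_self))
      fun t ht => (hpos t (hsub ht)).ne').sqrt.aemeasurable measurableSet_Ioi)
    (aemeasurable_restrict_of_antitoneOn measurableSet_Ioi hφanti)
    (fun t _ => sqrt_nonneg _) fun u hu => (hφu u hu).2

theorem stmt_8 (f f' : ℝ → ℝ) (m M s : ℝ) (hm : 0 < m) (hmM : m < M)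
    (hs : s ∈ Ioo (0:ℝ) 1)
    (hcont : ContinuousOn f (Ici 0))
    (hderiv : ∀ t ∈ Ioi (0:ℝ), HasDerivAt f (f' t) t)
    (hmono : MonotoneOn f (Ici 0))
    (hf0 : f 0 = 0)
    (hpos : ∀ t ∈ Ioi (0:ℝ), 0 < f t)
    (h : ∀ t ∈ Ioi (0:ℝ), (1 + m) * f t ≤ t * f' t ∧ t * f' t ≤ (1 + M) * f t)
    (F φ : ℝ → ℝ) (hF : ∀ t, F t = ∫ τ in (0:ℝ)..t, f τ)
    (hφ : ∀ u, φ u = ∫ t in Ioi u, 1 / Real.sqrt (F t)) :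
    IntegrableOn (fun t => φ t ^ (1 / s)) (Ioi 1) ↔
      IntegrableOn (fun t => (t / f t) ^ (1 / (2 * s))) (Ioi 1) :=
  stmt_8_general f f' m M s hm hmM hs hcont hderiv hpos h F φ hF hφ
end

section
/- Suppose f is increasing, f(t) > 0 for t > 0, and ∫_{t₀}^∞ f(t) t^{-2/(1-s)} dt < ∞ for some t₀ > 0, where s ∈ (0,1). Then f(u) / u^{(1+s)/(1-s)} → 0 as u → +∞. -/
/-!
On `[u, 2u]` the integrand `f t * t ^ (-p)` is at least `f u * (2u) ^ (-p)` because `f` is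
increasing and `t ^ (-p)` decreasing, so `2 ^ (-p) * f u * u ^ (1 - p) ≤ ∫ t in u..2u, f t * t ^ (-p)`.
The right-hand side is the difference of two partial integrals of a convergent improper
integral, hence tends to `0`. With `p = 2 / (1 - s)` one has `1 - p = -(1 + s) / (1 - s)`.
-/

open Set Real MeasureTheory Filter Topology

theorem tendsto_intervalIntegral_self_two_mul {E : Type*} [NormedAddCommGroup E]
    [NormedSpace ℝ E] {g : ℝ → E} {a : ℝ} (hg : IntegrableOn g (Ioi a)) :
    Tendsto (fun u => ∫ t in u..2 * u, g t) atTop (𝓝 0) := by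
  have hpartial := intervalIntegral_tendsto_integral_Ioi a hg tendsto_id
  have hdiff := (hpartial.comp (tendsto_id.const_mul_atTop two_pos)).sub hpartial
  rw [sub_self] at hdiff
  refine hdiff.congr' ?_
  filter_upwards [eventually_gt_atTop (max a 0)] with u hu
  rw [max_lt_iff] at hu
  have hint : ∀ b ≥ a, IntervalIntegrable g volume a b := fun b hb =>
    (intervalIntegrable_iff_integrableOn_Ioc_of_le hb).2 (hg.mono_set Ioc_subset_Ioi_self)
  exact intervalIntegral.integral_interval_sub_left (hint (2 * u) (by linarith)) (hint u hu.1.le)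

theorem rpow_neg_two_mul_mul_le_intervalIntegral {f : ℝ → ℝ} {p u : ℝ} (hf : Monotone f)
    (hp : 0 ≤ p) (hu : 0 < u) (hfu : 0 ≤ f u)
    (hint : IntervalIntegrable (fun t => f t * t ^ (-p)) volume u (2 * u)) :
    (2 : ℝ) ^ (-p) * (f u * u ^ (1 - p)) ≤ ∫ t in u..2 * u, f t * t ^ (-p) := by
  have hu2 : u ≤ 2 * u := by linarith
  calc (2 : ℝ) ^ (-p) * (f u * u ^ (1 - p))
      = ∫ _ in u..2 * u, f u * (2 * u) ^ (-p) := by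
        rw [intervalIntegral.integral_const, smul_eq_mul, mul_rpow zero_le_two hu.le,
          sub_eq_add_neg, rpow_add hu, rpow_one]
        ring
    _ ≤ ∫ t in u..2 * u, f t * t ^ (-p) := by
        refine intervalIntegral.integral_mono_on hu2 intervalIntegrable_const hint ?_
        intro t ⟨hut, ht2u⟩
        exact mul_le_mul (hf hut) (rpow_le_rpow_of_nonpos (hu.trans_le hut) ht2u (by linarith))
          (by positivity) (hfu.trans (hf hut))

theorem tendsto_mul_rpow_one_sub_of_integrableOn {f : ℝ → ℝ} {p a : ℝ} (hf : Monotone f)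
    (hf0 : ∀ᶠ t in atTop, 0 ≤ f t) (hp : 0 ≤ p)
    (hint : IntegrableOn (fun t => f t * t ^ (-p)) (Ioi a)) :
    Tendsto (fun u => f u * u ^ (1 - p)) atTop (𝓝 0) := by
  have hupper := (tendsto_intervalIntegral_self_two_mul hint).const_mul ((2 : ℝ) ^ p)
  rw [mul_zero] at hupper
  refine tendsto_of_tendsto_of_tendsto_of_le_of_le' tendsto_const_nhds hupper ?_ ?_
  · filter_upwards [hf0, eventually_gt_atTop 0] with u hfu hu
    positivity
  filter_upwards [hf0, eventually_gt_atTop (max a 0)] with u hfu hu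
  rw [max_lt_iff] at hu
  have hsub : Icc u (2 * u) ⊆ Ioi a := fun t ht => hu.1.trans_le ht.1
  have hint' : IntervalIntegrable (fun t => f t * t ^ (-p)) volume u (2 * u) :=
    (intervalIntegrable_iff_integrableOn_Icc_of_le (by linarith)).2 (hint.mono_set hsub)
  calc f u * u ^ (1 - p) = (2 : ℝ) ^ p * ((2 : ℝ) ^ (-p) * (f u * u ^ (1 - p))) := by
        rw [← mul_assoc, ← rpow_add two_pos, add_neg_cancel, rpow_zero, one_mul]
    _ ≤ (2 : ℝ) ^ p * ∫ t in u..2 * u, f t * t ^ (-p) := by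
        gcongr
        exact rpow_neg_two_mul_mul_le_intervalIntegral hf hp hu.2 hfu hint'

theorem stmt_11_general (f : ℝ → ℝ) (s t₀ : ℝ) (hs : s ∈ Ioo (0:ℝ) 1)
    (hmono : Monotone f)
    (hpos : ∀ t ∈ Ioi (0:ℝ), 0 < f t)
    (hint : IntegrableOn (fun t => f t * t ^ (-2 / (1 - s))) (Ioi t₀)) :
    Tendsto (fun u => f u / u ^ ((1 + s) / (1 - s))) atTop (nhds 0) := by
  have h1s : 0 < 1 - s := sub_pos.2 hs.2
  have hexp : -2 / (1 - s) = -(2 / (1 - s)) := neg_div _ _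
  rw [hexp] at hint
  have hf0 : ∀ᶠ t in atTop, 0 ≤ f t :=
    (eventually_gt_atTop 0).mono fun t ht => (hpos t ht).le
  refine (tendsto_mul_rpow_one_sub_of_integrableOn hmono hf0 (by positivity) hint).congr' ?_
  filter_upwards [eventually_gt_atTop 0] with u hu
  have hq : 1 - 2 / (1 - s) = -((1 + s) / (1 - s)) := by field_simp; ring
  rw [hq, rpow_neg hu.le, ← div_eq_mul_inv]

theorem stmt_11 (f : ℝ → ℝ) (s t₀ : ℝ) (hs : s ∈ Ioo (0:ℝ) 1) (ht₀ : 0 < t₀)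
    (hmono : Monotone f)
    (hpos : ∀ t ∈ Ioi (0:ℝ), 0 < f t)
    (hint : IntegrableOn (fun t => f t * t ^ (-2 / (1 - s))) (Ioi t₀)) :
    Tendsto (fun u => f u / u ^ ((1 + s) / (1 - s))) atTop (nhds 0) :=
  stmt_11_general f s t₀ hs hmono hpos hint
end
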